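/- For integer a ≥ 1 and x > 0, ∫_0^x π(a,z) dz = x − Σ_{i=0}^{a−1} π(i+1, x), where π(a,x) is the Poisson upper-tail function. -/

import Mathlib

/-- The Poisson probability mass function `Po[α](i)`. -/
noncomputable def poissonPMF (α : ℝ) (i : ℕ) : ℝ :=
  Real.exp (-α) * α ^ i / (i.factorial : ℝ)

/-- The Poisson upper tail `π(a,x) = Σ_{i ≥ a} Po[x](i)`. -/
noncomputable def poissonTail (a : ℕ) (x : ℝ) : ℝ :=
  ∑' i : ℕ, (if a ≤ i then poissonPMF x i else 0)

/-!
Since `π(a, z) = 1 - Σ_{i<a} Po[z](i)` and the derivatives `d/dz Po[z](i) = Po[z](i-1) - Po[z](i)`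
telescope, `π(j+1, ·)` is the antiderivative of `Po[·](j)` vanishing at `0`. Integrating
`1 - Σ_{i<a} Po[z](i)` termwise gives `x - Σ_{i<a} π(i+1, x)`.
-/

lemma hasSum_poissonPMF (x : ℝ) : HasSum (poissonPMF x) 1 := by
  have h := (NormedSpace.expSeries_div_hasSum_exp x).mul_left (Real.exp (-x))
  rw [← Real.exp_eq_exp_ℝ, ← Real.exp_add, neg_add_cancel, Real.exp_zero] at h
  simp only [← mul_div_assoc] at h
  exact h

lemma poissonTail_eq_one_sub_sum (a : ℕ) (x : ℝ) :
    poissonTail a x = 1 - ∑ i ∈ Finset.range a, poissonPMF x i := by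
  have head : HasSum (fun i ↦ if i < a then poissonPMF x i else 0)
      (∑ i ∈ Finset.range a, poissonPMF x i) := by
    rw [← Finset.sum_congr rfl fun i hi ↦ if_pos (Finset.mem_range.mp hi)]
    exact hasSum_sum_of_ne_finset_zero fun i hi ↦ if_neg (by simpa using hi)
  refine ((hasSum_poissonPMF x).sub head).tsum_eq ▸ tsum_congr fun i ↦ ?_
  split_ifs <;> first | omega | ring

lemma poissonPMF_zero_left {i : ℕ} (hi : i ≠ 0) : poissonPMF 0 i = 0 := by
  simp [poissonPMF, hi]

lemma hasDerivAt_poissonPMF_zero (z : ℝ) :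
    HasDerivAt (fun z ↦ poissonPMF z 0) (-poissonPMF z 0) z := by
  simpa [poissonPMF] using (hasDerivAt_neg z).exp

lemma hasDerivAt_poissonPMF_succ (k : ℕ) (z : ℝ) :
    HasDerivAt (fun z ↦ poissonPMF z (k + 1)) (poissonPMF z k - poissonPMF z (k + 1)) z := by
  have h := ((hasDerivAt_neg z).exp.mul
    (hasDerivAt_pow (k + 1) z)).div_const ((k + 1).factorial : ℝ)
  refine h.congr_deriv ?_
  simp only [poissonPMF, Nat.factorial_succ, Nat.cast_mul]
  field_simp
  push_cast
  ring

lemma hasDerivAt_sum_range_poissonPMF (j : ℕ) (z : ℝ) :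
    HasDerivAt (fun z ↦ ∑ i ∈ Finset.range (j + 1), poissonPMF z i) (-poissonPMF z j) z := by
  induction j with
  | zero => simpa using hasDerivAt_poissonPMF_zero z
  | succ j ih =>
    simp only [Finset.sum_range_succ _ (j + 1)]
    exact (ih.add (hasDerivAt_poissonPMF_succ j z)).congr_deriv (by ring)

lemma hasDerivAt_poissonTail_succ (j : ℕ) (z : ℝ) :
    HasDerivAt (poissonTail (j + 1)) (poissonPMF z j) z := by
  rw [funext (poissonTail_eq_one_sub_sum (j + 1)), ← neg_neg (poissonPMF z j)]
  exact (hasDerivAt_sum_range_poissonPMF j z).const_sub 1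

lemma poissonTail_succ_zero (j : ℕ) : poissonTail (j + 1) 0 = 0 := by
  rw [poissonTail_eq_one_sub_sum, Finset.sum_range_succ',
    Finset.sum_eq_zero fun i _ ↦ poissonPMF_zero_left i.succ_ne_zero]
  simp [poissonPMF]

lemma continuous_poissonPMF (i : ℕ) : Continuous fun z ↦ poissonPMF z i := by
  unfold poissonPMF; fun_prop

lemma integral_poissonPMF (j : ℕ) (x : ℝ) :
    ∫ z in (0 : ℝ)..x, poissonPMF z j = poissonTail (j + 1) x := by
  rw [intervalIntegral.integral_eq_sub_of_hasDerivAt (fun z _ ↦ hasDerivAt_poissonTail_succ j z)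
    ((continuous_poissonPMF j).intervalIntegrable 0 x), poissonTail_succ_zero, sub_zero]

theorem poisson_tail_integral_general (a : ℕ) (x : ℝ) :
    ∫ z in (0 : ℝ)..x, poissonTail a z =
      x - ∑ i ∈ Finset.range a, poissonTail (i + 1) x := by
  simp_rw [poissonTail_eq_one_sub_sum a]
  rw [intervalIntegral.integral_sub intervalIntegrable_const
      ((continuous_finsetSum _ fun i _ ↦ continuous_poissonPMF i).intervalIntegrable 0 x),
    intervalIntegral.integral_finsetSum fun i _ ↦
      (continuous_poissonPMF i).intervalIntegrable 0 x]
  simp [integral_poissonPMF]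

/-- For integer `a ≥ 1` and `x > 0`,
`∫_0^x π(a,z) dz = x − Σ_{i=0}^{a−1} π(i+1, x)`. -/
theorem poisson_tail_integral (a : ℕ) (ha : 1 ≤ a) (x : ℝ) (hx : 0 < x) :
    ∫ z in (0 : ℝ)..x, poissonTail a z =
      x - ∑ i ∈ Finset.range a, poissonTail (i + 1) x :=
  poisson_tail_integral_general a x
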